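/- arXiv:1907.12405 — 2 statements merged into one kernel-verified Lean document; each statement's English description precedes it below -/
import Mathlib

section
/- Assume in addition that the topological support of π is the interval [a,b] with 0 < a < b, and let k ∈ ℕ* satisfy (k−1)(b−a) ≥ a. Then the topological support of the law of B_{kb} is [0,b], and the topological support of η is [0,b]. -/
open MeasureTheory ProbabilityTheory Filter Set

noncomputable section

/-- Partial sums `S n = X 1 + ... + X n` of the waiting times. -/
def rwSum {Ω : Type*} (X : ℕ → Ω → ℝ) (n : ℕ) (ω : Ω) : ℝ :=
  ∑ i ∈ Finset.range n, X i ω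

/-- Residual lifetime `B t = inf {S n : S n > t} - t` of the renewal process. -/
def resLife {Ω : Type*} (X : ℕ → Ω → ℝ) (t : ℝ) (ω : Ω) : ℝ :=
  sInf {x | ∃ n : ℕ, x = rwSum X n ω ∧ t < x} - t

/-- The functional `η(f) = (1/μ) ∫₀^∞ E(f(Y-s) 1_{Y-s ≥ 0}) ds`, `Y ~ π`. -/
def etaF (π : Measure ℝ) (μ : ℝ) (f : ℝ → ℝ) : ℝ :=
  (1 / μ) * ∫ s in Set.Ici (0 : ℝ), (∫ y, Set.indicator (Set.Ici (0 : ℝ)) f (y - s) ∂π)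

/-- `φ(x) = e^{(θ-ε')x}` for `x ≥ 0`, `φ(x) = 1` for `x < 0`. -/
def phiF (θ ε' : ℝ) (x : ℝ) : ℝ := if 0 ≤ x then Real.exp ((θ - ε') * x) else 1

/-- Topological support of a measure: points all of whose open neighbourhoods have
positive measure. -/
def msupport {α : Type*} [TopologicalSpace α] [MeasurableSpace α] (m : Measure α) :
    Set α := {x | ∀ U : Set α, IsOpen U → x ∈ U → m U ≠ 0}

/-!
On the almost sure event that every step lies in `[a, b]`, the residual lifetime at any time
`t ≥ 0` lies in `(0, b]`. Conversely, for `z ∈ (0, b)` the condition `(k - 1)(b - a) ≥ a` leaves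
room for step lengths `y, w ∈ [a, b]` with `y < b` and `k y + w = k b + z`. With positive
probability the first `k` steps are close to `y` and the next one close to `w`; then
`S k ≤ k b < S (k + 1)`, so `B (k b) = S (k + 1) - k b` is close to `z`.

For `η`, the mass of `V` is `(1/μ) ∫_{s ≥ 0} π {y | y - s ∈ V ∩ [0, ∞)} ds`. It vanishes outside
`[0, b]` because `π` does beyond `b`, and it is positive near `z ∈ (0, b)` because `π` charges
every interval `(b - δ, b)`, which the shifts `s ≈ b - z` move close to `z`.
-/

lemma msupport_eq_support {α : Type*} [TopologicalSpace α] [MeasurableSpace α] (m : Measure α) :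
    msupport m = m.support := by
  ext x
  simp only [msupport, Measure.support_eq_forall_isOpen, mem_ofPred_eq, pos_iff_ne_zero]
  exact forall_congr' fun U => Imp.swap

lemma MeasureTheory.Measure.support_eq_Icc_of {m : Measure ℝ} {c d : ℝ} (hcd : c < d)
    (hout : m (Icc c d)ᶜ = 0) (hin : ∀ z ∈ Ioo c d, ∀ ε > 0, m (Ioo (z - ε) (z + ε)) ≠ 0) :
    m.support = Icc c d := by
  refine (Measure.support_subset_of_isClosed isClosed_Icc hout).antisymm ?_
  rw [← closure_Ioo hcd.ne]
  refine closure_minimal (fun z hz => ?_) Measure.isClosed_support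
  refine (Measure.mem_support_iff_forall z).2 fun U hU => ?_
  obtain ⟨ε, hε, hball⟩ := Metric.mem_nhds_iff.1 hU
  rw [Real.ball_eq_Ioo] at hball
  exact (pos_iff_ne_zero.2 (hin z hz ε hε)).trans_le (measure_mono hball)

lemma ProbabilityTheory.iIndepFun.measure_biInter_preimage_ne_zero {Ω ι β : Type*}
    [MeasurableSpace Ω] [MeasurableSpace β] {P : Measure Ω} {X : ι → Ω → β} (hX : iIndepFun X P)
    (S : Finset ι) {C : ι → Set β} (hC : ∀ i ∈ S, MeasurableSet (C i))
    (hpos : ∀ i ∈ S, P (X i ⁻¹' C i) ≠ 0) :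
    P (⋂ i ∈ S, X i ⁻¹' C i) ≠ 0 := by
  rw [hX.measure_inter_preimage_eq_mul S hC]
  exact Finset.prod_ne_zero_iff.2 hpos

lemma Nat.exists_le_and_lt_succ {α : Type*} [LinearOrder α] {f : ℕ → α} {t : α} (h0 : f 0 ≤ t)
    (h : ∃ n, t < f n) : ∃ N, f N ≤ t ∧ t < f (N + 1) := by
  by_contra! H
  obtain ⟨n, hn⟩ := h
  exact hn.not_ge (Nat.rec h0 H n)

lemma Real.sInf_lt_iff {s : Set ℝ} (hs : BddBelow s) {c : ℝ} :
    sInf s < c ↔ (∃ x ∈ s, x < c) ∨ (s = ∅ ∧ 0 < c) := by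
  rcases s.eq_empty_or_nonempty with rfl | hne
  · simp
  · simp [csInf_lt_iff hs hne, hne.ne_empty]

section Renewal

variable {Ω : Type*} (X : ℕ → Ω → ℝ) (ω : Ω)

lemma rwSum_zero : rwSum X 0 ω = 0 := by
  simp [rwSum]

lemma rwSum_succ (n : ℕ) : rwSum X (n + 1) ω = rwSum X n ω + X n ω := by
  simp [rwSum, Finset.sum_range_succ]

variable {X ω}

lemma rwSum_mem_Icc {n : ℕ} {l u : ℝ} (hX : ∀ i < n, X i ω ∈ Icc l u) :
    rwSum X n ω ∈ Icc (n * l) (n * u) := by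
  have hX' : ∀ i ∈ Finset.range n, X i ω ∈ Icc l u := fun i hi => hX i (Finset.mem_range.1 hi)
  constructor
  · simpa [rwSum] using Finset.card_nsmul_le_sum _ _ l fun i hi => (hX' i hi).1
  · simpa [rwSum] using Finset.sum_le_card_nsmul _ _ u fun i hi => (hX' i hi).2

lemma monotone_rwSum (hX : ∀ n, 0 ≤ X n ω) : Monotone fun n => rwSum X n ω :=
  monotone_nat_of_le_succ fun n => by simp [rwSum_succ, hX n]

lemma resLife_eq_of_rwSum_le_of_lt (hX : ∀ n, 0 ≤ X n ω) {t : ℝ} {N : ℕ}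
    (hN : rwSum X N ω ≤ t) (hN' : t < rwSum X (N + 1) ω) :
    resLife X t ω = rwSum X (N + 1) ω - t := by
  suffices IsLeast {x | ∃ n, x = rwSum X n ω ∧ t < x} (rwSum X (N + 1) ω) by
    rw [resLife, this.csInf_eq]
  refine ⟨⟨N + 1, rfl, hN'⟩, ?_⟩
  rintro _ ⟨n, rfl, hn⟩
  refine monotone_rwSum hX (Nat.succ_le_of_lt ?_)
  by_contra! h
  exact hn.not_ge ((monotone_rwSum hX h).trans hN)

lemma resLife_mem_Ioc {a b t : ℝ} (ha : 0 < a) (ht : 0 ≤ t) (hX : ∀ n, X n ω ∈ Icc a b) :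
    resLife X t ω ∈ Ioc 0 b := by
  have hX0 : ∀ n, 0 ≤ X n ω := fun n => ha.le.trans (hX n).1
  obtain ⟨n, hn⟩ := exists_nat_gt (t / a)
  have hreach : t < rwSum X n ω := calc
    t < n * a := (div_lt_iff₀ ha).1 hn
    _ ≤ rwSum X n ω := (rwSum_mem_Icc fun i _ => hX i).1
  obtain ⟨N, hN, hN'⟩ := Nat.exists_le_and_lt_succ (f := fun n => rwSum X n ω)
    (by rwa [rwSum_zero]) ⟨n, hreach⟩
  rw [resLife_eq_of_rwSum_le_of_lt hX0 hN hN']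
  rw [rwSum_succ] at hN' ⊢
  exact ⟨by linarith, by linarith [(hX N).2]⟩

lemma resLife_mem_Ioo_of_steps (hX : ∀ n, 0 ≤ X n ω) {k : ℕ} {y w δ t : ℝ}
    (hy : ∀ i < k, X i ω ∈ Ioo (y - δ) (y + δ)) (hw : X k ω ∈ Ioo (w - δ) (w + δ))
    (hyt : k * (y + δ) ≤ t) (hwt : t ≤ k * y + w - (k + 1) * δ) :
    resLife X t ω ∈ Ioo (k * y + w - t - (k + 1) * δ) (k * y + w - t + (k + 1) * δ) := by
  have hS := rwSum_mem_Icc fun i hi => Ioo_subset_Icc_self (hy i hi)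
  have hS' := rwSum_succ X ω k
  rw [resLife_eq_of_rwSum_le_of_lt hX (hS.2.trans hyt) (by linarith [hS.1, hw.1])]
  constructor <;> linarith [hS.1, hS.2, hw.1, hw.2]

variable [MeasurableSpace Ω]

lemma measurable_rwSum (hX : ∀ n, Measurable (X n)) (n : ℕ) : Measurable (rwSum X n) :=
  Finset.measurable_sum _ fun i _ => hX i

lemma measurable_resLife (hX : ∀ n, Measurable (X n)) (t : ℝ) : Measurable (resLife X t) := by
  refine Measurable.sub_const (measurable_of_Iio fun c => ?_) t
  have hbdd : ∀ ω, BddBelow {x | ∃ n, x = rwSum X n ω ∧ t < x} :=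
    fun ω => ⟨t, fun x hx => hx.choose_spec.2.le⟩
  have hS := measurable_rwSum hX
  simp only [preimage, mem_Iio, Real.sInf_lt_iff (hbdd _)]
  simp only [eq_empty_iff_forall_notMem, mem_ofPred_eq, ↓existsAndEq, true_and, exists_and_right,
    not_and, not_lt, forall_exists_index, forall_eq_apply_imp_iff]
  exact Measurable.setOf (by fun_prop)

end Renewal

lemma exists_step_lengths {a b z : ℝ} {k : ℕ} (hk : 1 ≤ k) (hab : a < b)
    (hkab : a ≤ ((k : ℝ) - 1) * (b - a)) (hz : z ∈ Ioo 0 b) :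
    ∃ y ∈ Ico a b, ∃ w ∈ Icc a b, k * y + w = k * b + z := by
  have hk0 : (0 : ℝ) < k := by exact_mod_cast hk
  set y := max a (b - (b - z) / k)
  have hyb : y < b := max_lt hab (by linarith [div_pos (sub_pos.2 hz.2) hk0])
  have hyw : (k - 1) * b + z ≤ k * y := by
    have : b - (b - z) / k ≤ y := le_max_right _ _
    rw [sub_le_comm, le_div_iff₀ hk0] at this
    linarith
  have hya : k * y ≤ k * b + z - a := by
    rw [← le_div_iff₀' hk0]
    refine max_le ?_ ?_ <;> rw [le_div_iff₀ hk0]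
    · nlinarith [hz.1]
    · rw [sub_mul, div_mul_cancel₀ _ hk0.ne']
      linarith
  exact ⟨y, ⟨le_max_left _ _, hyb⟩, k * b + z - k * y, ⟨by linarith, by linarith⟩, by ring⟩

section IidSteps

variable {Ω : Type*} [MeasurableSpace Ω] {P : Measure Ω} {π : Measure ℝ} {X : ℕ → Ω → ℝ}

lemma ae_forall_mem_of_map_eq (hXmeas : ∀ n, Measurable (X n)) (hXlaw : ∀ n, P.map (X n) = π)
    {s : Set ℝ} (hs : ∀ᵐ x ∂π, x ∈ s) : ∀ᵐ ω ∂P, ∀ n, X n ω ∈ s :=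
  ae_all_iff.2 fun n => ae_of_ae_map (hXmeas n).aemeasurable ((hXlaw n).symm ▸ hs)

lemma measure_resLife_mem_Ioo_ne_zero (hXmeas : ∀ n, Measurable (X n))
    (hXlaw : ∀ n, P.map (X n) = π) (hXindep : iIndepFun X P) {a b : ℝ} (ha : 0 < a)
    (hab : a < b) (hsupp : π.support = Icc a b) {k : ℕ} (hk : 1 ≤ k)
    (hkab : a ≤ ((k : ℝ) - 1) * (b - a)) {z : ℝ} (hz : z ∈ Ioo 0 b) {ε : ℝ} (hε : 0 < ε) :
    P {ω | resLife X (k * b) ω ∈ Ioo (z - ε) (z + ε)} ≠ 0 := by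
  obtain ⟨y, ⟨hay, hyb⟩, w, hw, hyw⟩ := exists_step_lengths hk hab hkab hz
  set δ := min (b - y) (min ε z / (k + 1))
  have hδ0 : 0 < δ := lt_min (by linarith) (div_pos (lt_min hε hz.1) (by positivity))
  have hδε : (k + 1) * δ ≤ min ε z := by
    rw [mul_comm, ← le_div_iff₀ (by positivity)]
    exact min_le_right _ _
  have hπpos : ∀ x ∈ Icc a b, π (Ioo (x - δ) (x + δ)) ≠ 0 := fun x hx =>
    ((Measure.mem_support_iff_forall x).1 (hsupp ▸ hx) _
      (Ioo_mem_nhds (by linarith) (by linarith))).ne'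
  let C : ℕ → Set ℝ := fun i => if i < k then Ioo (y - δ) (y + δ) else Ioo (w - δ) (w + δ)
  have hC : ∀ i, MeasurableSet (C i) := fun i => by
    dsimp only [C]
    split_ifs <;> exact measurableSet_Ioo
  have hE : P (⋂ i ∈ Finset.range (k + 1), X i ⁻¹' C i) ≠ 0 := by
    refine hXindep.measure_biInter_preimage_ne_zero _ (fun i _ => hC i) fun i _ => ?_
    rw [← Measure.map_apply (hXmeas i) (hC i), hXlaw i]
    dsimp only [C]
    split_ifs
    exacts [hπpos y ⟨hay, hyb.le⟩, hπpos w hw]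
  refine fun h0 => hE (measure_mono_null_ae ?_ h0)
  filter_upwards [ae_forall_mem_of_map_eq hXmeas hXlaw (hsupp ▸ Measure.support_mem_ae)]
    with ω (hω : ∀ n, X n ω ∈ Icc a b) (hωE : ω ∈ ⋂ i ∈ Finset.range (k + 1), X i ⁻¹' C i)
  simp only [mem_iInter, Finset.mem_range, mem_preimage] at hωE
  have hXy : ∀ i < k, X i ω ∈ Ioo (y - δ) (y + δ) := fun i hi => by
    simpa [C, hi] using hωE i (by omega)
  have hXw : X k ω ∈ Ioo (w - δ) (w + δ) := by simpa [C] using hωE k (by omega)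
  have hB := resLife_mem_Ioo_of_steps (fun n => ha.le.trans (hω n).1) hXy hXw (t := k * b)
    (by nlinarith [min_le_left (b - y) (min ε z / (k + 1))]) (by linarith [min_le_right ε z])
  rw [hyw, add_sub_cancel_left] at hB
  exact Ioo_subset_Ioo (by linarith [min_le_left ε z]) (by linarith [min_le_left ε z]) hB

lemma support_map_resLife_eq_Icc (hXmeas : ∀ n, Measurable (X n))
    (hXlaw : ∀ n, P.map (X n) = π) (hXindep : iIndepFun X P) {a b : ℝ} (ha : 0 < a)
    (hab : a < b) (hsupp : π.support = Icc a b) {k : ℕ} (hk : 1 ≤ k)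
    (hkab : a ≤ ((k : ℝ) - 1) * (b - a)) :
    (P.map (resLife X (k * b))).support = Icc 0 b := by
  have hB := measurable_resLife hXmeas (k * b)
  refine Measure.support_eq_Icc_of (by linarith) ?_ fun z hz ε hε => ?_
  · rw [Measure.map_apply hB measurableSet_Icc.compl]
    refine ae_iff.1 ((ae_forall_mem_of_map_eq hXmeas hXlaw (hsupp ▸ Measure.support_mem_ae)).mono
      fun ω hω => Ioc_subset_Icc_self (resLife_mem_Ioc ha (by have := ha.trans hab; positivity) hω))
  · rw [Measure.map_apply hB measurableSet_Ioo]
    exact measure_resLife_mem_Ioo_ne_zero hXmeas hXlaw hXindep ha hab hsupp hk hkab hz hε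

end IidSteps

section Eta

variable {π : Measure ℝ}

lemma integral_indicator_Ici_indicator_sub {V : Set ℝ} (hV : MeasurableSet V) (s : ℝ) :
    ∫ y, (Ici 0).indicator (V.indicator 1) (y - s) ∂π = π.real ((· - s) ⁻¹' (Ici 0 ∩ V)) := by
  rw [← integral_indicator_one ((measurable_sub_const s) (measurableSet_Ici.inter hV))]
  simp_rw [indicator_indicator]
  rfl

lemma measurable_measure_preimage_sub [SFinite π] {W : Set ℝ} (hW : MeasurableSet W) :
    Measurable fun s => π ((· - s) ⁻¹' W) :=
  measurable_measure_prodMk_left ((measurable_snd.sub measurable_fst) hW)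

lemma integrableOn_measureReal_preimage_sub [IsFiniteMeasure π] {b : ℝ} (hb : π (Ioi b) = 0)
    {W : Set ℝ} (hW : MeasurableSet W) (hW0 : W ⊆ Ici 0) :
    IntegrableOn (fun s => π.real ((· - s) ⁻¹' W)) (Ici 0) := by
  refine IntegrableOn.of_forall_sdiff_eq_zero (s := Icc 0 b) ?_ measurableSet_Ici fun s hs => ?_
  · refine Measure.integrableOn_of_bounded (M := π.real univ) (by simp)
      (measurable_measure_preimage_sub hW).ennreal_toReal.aestronglyMeasurable
      (Eventually.of_forall fun s => ?_)
    simpa [abs_of_nonneg] using measureReal_mono (μ := π) (subset_univ ((· - s) ⁻¹' W))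
  · refine (measureReal_eq_zero_iff).2 (measure_mono_null (fun y hy => ?_) hb)
    exact (not_le.1 fun h => hs.2 ⟨hs.1, h⟩).trans_le (sub_nonneg.1 (hW0 hy))

lemma setIntegral_measureReal_preimage_sub_pos [IsFiniteMeasure π] {a b : ℝ} (hab : a < b)
    (hsupp : π.support = Icc a b) {z : ℝ} (hz : z ∈ Ioo 0 b) {ε : ℝ} (hε : 0 < ε) :
    0 < ∫ s in Ici 0, π.real ((· - s) ⁻¹' (Ici 0 ∩ Ioo (z - ε) (z + ε))) := by
  obtain ⟨hz0, hzb⟩ := hz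
  have hb : π (Ioi b) = 0 := measure_mono_null (fun x hx => by simp [hsupp, (mem_Ioi.1 hx).not_ge])
    Measure.measure_compl_support
  rw [setIntegral_pos_iff_support_of_nonneg_ae (Eventually.of_forall fun _ => measureReal_nonneg)
    (integrableOn_measureReal_preimage_sub hb (measurableSet_Ici.inter measurableSet_Ioo)
      inter_subset_left)]
  set δ := min (min ε z) (min (b - a) (b - z))
  have hδ0 : 0 < δ := lt_min (lt_min hε hz0) (lt_min (by linarith) (by linarith))
  have hδ : δ ≤ ε ∧ δ ≤ z ∧ δ ≤ b - a ∧ δ ≤ b - z := by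
    refine ⟨?_, ?_, ?_, ?_⟩ <;> simp [δ]
  have hJ : π (Ioo (b - δ) b) ≠ 0 :=
    ((Measure.mem_support_iff_forall (b - δ / 2)).1 (by rw [hsupp]; constructor <;> linarith)
      _ (Ioo_mem_nhds (by linarith) (by linarith))).ne'
  have hsub : Ioo (b - z - δ) (b - z) ⊆
      Function.support (fun s => π.real ((· - s) ⁻¹' (Ici 0 ∩ Ioo (z - ε) (z + ε)))) ∩ Ici 0 := by
    intro s hs
    refine ⟨?_, by simp only [mem_Ici]; linarith [hs.1]⟩
    refine (measureReal_ne_zero_iff).2 fun h => hJ (measure_mono_null (fun y hy => ?_) h)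
    obtain ⟨hy1, hy2⟩ := hy
    obtain ⟨hs1, hs2⟩ := hs
    exact ⟨by simp only [mem_Ici]; linarith, by linarith, by linarith⟩
  calc 0 < volume (Ioo (b - z - δ) (b - z)) := by simp [hδ0]
    _ ≤ _ := measure_mono hsub

lemma measureReal_eq_of_integral_eq_etaF {μ : ℝ} {η : Measure ℝ}
    (hid : ∀ f : ℝ → ℝ, Measurable f → (∃ C : ℝ, ∀ x, |f x| ≤ C) → ∫ x, f x ∂η = etaF π μ f)
    {V : Set ℝ} (hV : MeasurableSet V) :
    η.real V = 1 / μ * ∫ s in Ici 0, π.real ((· - s) ⁻¹' (Ici 0 ∩ V)) := by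
  have hbdd : ∃ C : ℝ, ∀ x, |V.indicator 1 x| ≤ C :=
    ⟨1, fun x => by by_cases hx : x ∈ V <;> simp [hx]⟩
  rw [← integral_indicator_one hV, hid _ (measurable_one.indicator hV) hbdd, etaF]
  simp_rw [integral_indicator_Ici_indicator_sub hV]

lemma support_eq_Icc_of_integral_eq_etaF [IsProbabilityMeasure π]
    (hπint : Integrable (fun x => x) π) {μ : ℝ} (hμ : μ = ∫ x, x ∂π) {a b : ℝ} (ha : 0 < a)
    (hab : a < b) (hsupp : π.support = Icc a b) {η : Measure ℝ} [IsFiniteMeasure η]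
    (hid : ∀ f : ℝ → ℝ, Measurable f → (∃ C : ℝ, ∀ x, |f x| ≤ C) → ∫ x, f x ∂η = etaF π μ f) :
    η.support = Icc 0 b := by
  have hπ : ∀ᵐ x ∂π, x ∈ Icc a b := hsupp ▸ Measure.support_mem_ae
  have hμ0 : 0 < μ := by
    have := integral_mono_ae (integrable_const a) hπint (hπ.mono fun x hx => hx.1)
    simp only [integral_const, probReal_univ, one_smul] at this
    linarith
  refine Measure.support_eq_Icc_of (by linarith) ?_ fun z hz ε hε => ?_
  · rw [← measureReal_eq_zero_iff, measureReal_eq_of_integral_eq_etaF hid measurableSet_Icc.compl,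
      setIntegral_eq_zero_of_forall_eq_zero, mul_zero]
    intro s (hs : 0 ≤ s)
    refine (measureReal_eq_zero_iff).2 (measure_mono_null (fun y hy => ?_) hπ)
    obtain ⟨hy0, hyb⟩ := hy
    simp only [mem_Ici, mem_compl_iff, mem_Icc, not_and, not_le] at hy0 hyb
    exact fun h => (hyb hy0).not_ge (by linarith [h.2])
  · rw [← measureReal_ne_zero_iff, measureReal_eq_of_integral_eq_etaF hid measurableSet_Ioo]
    exact (mul_pos (one_div_pos.2 hμ0)
      (setIntegral_measureReal_preimage_sub_pos hab hsupp hz hε)).ne'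

end Eta

theorem stmt4_general
    {Ω : Type*} [MeasurableSpace Ω] (P : Measure Ω)
    (π : Measure ℝ) [IsProbabilityMeasure π]
    (hπint : Integrable (fun x => x) π)
    (μ : ℝ) (hμ : μ = ∫ x, x ∂π)
    (X : ℕ → Ω → ℝ)
    (hXmeas : ∀ n, Measurable (X n))
    (hXlaw : ∀ n, Measure.map (X n) P = π)
    (hXindep : iIndepFun X P)
    (a b : ℝ) (ha : 0 < a) (hab : a < b)
    (hsupp : msupport π = Set.Icc a b)
    (k : ℕ) (hk : 1 ≤ k) (hkab : a ≤ ((k : ℝ) - 1) * (b - a)) :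
    msupport (Measure.map (resLife X ((k : ℝ) * b)) P) = Set.Icc 0 b ∧
      ∀ η : Measure ℝ, IsFiniteMeasure η →
        (∀ f : ℝ → ℝ, Measurable f → (∃ Cf : ℝ, ∀ x, |f x| ≤ Cf) →
          ∫ x, f x ∂η = etaF π μ f) →
        msupport η = Set.Icc 0 b := by
  rw [msupport_eq_support] at hsupp
  refine ⟨?_, fun η _ hid => ?_⟩
  · rw [msupport_eq_support]
    exact support_map_resLife_eq_Icc hXmeas hXlaw hXindep ha hab hsupp hk hkab
  · rw [msupport_eq_support]
    exact support_eq_Icc_of_integral_eq_etaF hπint hμ ha hab hsupp hid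

/-- if the support of `π` is `[a,b]` (`0 < a < b`) and `(k-1)(b-a) ≥ a`,
then the law of `B_{kb}` and (any measure representing) `η` both have support `[0,b]`. -/
theorem stmt4
    {Ω : Type*} [MeasurableSpace Ω] (P : Measure Ω) [IsProbabilityMeasure P]
    (π : Measure ℝ) [IsProbabilityMeasure π]
    (hπpos : π (Set.Iic 0) = 0)
    (hπint : Integrable (fun x => x) π)
    (μ : ℝ) (hμ : μ = ∫ x, x ∂π)
    (X : ℕ → Ω → ℝ)
    (hXmeas : ∀ n, Measurable (X n))
    (hXlaw : ∀ n, Measure.map (X n) P = π)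
    (hXindep : iIndepFun X P)
    (a b : ℝ) (ha : 0 < a) (hab : a < b)
    (hsupp : msupport π = Set.Icc a b)
    (k : ℕ) (hk : 1 ≤ k) (hkab : a ≤ ((k : ℝ) - 1) * (b - a)) :
    msupport (Measure.map (resLife X ((k : ℝ) * b)) P) = Set.Icc 0 b ∧
      ∀ η : Measure ℝ, IsFiniteMeasure η →
        (∀ f : ℝ → ℝ, Measurable f → (∃ Cf : ℝ, ∀ x, |f x| ≤ Cf) →
          ∫ x, f x ∂η = etaF π μ f) →
        msupport η = Set.Icc 0 b :=
  stmt4_general P π hπint μ hμ X hXmeas hXlaw hXindep a b ha hab hsupp k hk hkab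
end
end

section
/- Let k be an integer with k ≥ q/2 and let α ∈ [q/(2k), 1]. Then P(L_{αT} ≥ k) ≤ K₁(q) ε^{q/2}, where K₁(q) = ∑_{i=1}^q q!/(q−i)!. -/
open MeasureTheory ProbabilityTheory Filter Set
open scoped Classical

noncomputable section

/-- The space `S↓` of nonincreasing nonnegative sequences with total sum at most 1
(encoded by the condition that all partial sums are at most 1). -/
abbrev Sdown : Type := {s : ℕ → ℝ //
  (∀ i, s (i + 1) ≤ s i) ∧ (∀ i, 0 ≤ s i) ∧ ∀ n, ∑ i ∈ Finset.range n, s i ≤ 1}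

/-- Index type for the whole family of random objects: one ratio sequence `ξ̃_u` per node
`u` of the genealogical tree (nodes are encoded as lists, latest generation first, the
`i`-th child of `u` being `i :: u`), together with one uniform tag position per tag. -/
def FragIdx (q : ℕ) : Type := (List ℕ) ⊕ (Fin q)

/-- Codomains of the family of random objects. -/
def FragTgt (q : ℕ) : FragIdx q → Type
  | Sum.inl _ => Sdown
  | Sum.inr _ => ℝ

instance fragTgtMS (q : ℕ) : ∀ i : FragIdx q, MeasurableSpace (FragTgt q i)
  | Sum.inl _ => inferInstanceAs (MeasurableSpace Sdown)
  | Sum.inr _ => inferInstanceAs (MeasurableSpace ℝ)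

/-- The combined family `(ξ̃_u)_u, (Y_k)_k` as a single indexed family. -/
def fragFam {Ω : Type*} (q : ℕ) (xit : List ℕ → Ω → Sdown) (Y : Fin q → Ω → ℝ) :
    ∀ i : FragIdx q, Ω → FragTgt q i
  | Sum.inl u => xit u
  | Sum.inr k => Y k

/-- A conservative fragmentation chain with `q` tagged fragments: the ratio sequences
`ξ̃_u` are i.i.d. with law `ν`, the tag positions `Y_k` are i.i.d. uniform on `[0,1]`,
and the whole family is independent. -/
structure FragModel (Ω : Type*) [MeasurableSpace Ω] (P : Measure Ω) (q : ℕ)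
    (ν : Measure Sdown) where
  xit : List ℕ → Ω → Sdown
  Y : Fin q → Ω → ℝ
  meas_xit : ∀ u, Measurable (xit u)
  meas_Y : ∀ k, Measurable (Y k)
  law_xit : ∀ u, Measure.map (xit u) P = ν
  law_Y : ∀ k, Measure.map (Y k) P = volume.restrict (Set.Icc (0 : ℝ) 1)
  indep : iIndepFun (m := fragTgtMS q) (fragFam q xit Y) P

namespace FragModel

variable {Ω : Type*} [MeasurableSpace Ω] {P : Measure Ω} {q : ℕ} {ν : Measure Sdown}

/-- Fragment sizes: `ξ_∅ = 1`, `ξ_{ui} = ξ̃_{ui} ξ_u`. -/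
def xi (M : FragModel Ω P q ν) : List ℕ → Ω → ℝ
  | [] => fun _ => 1
  | i :: u => fun ω => (M.xit u ω).1 i * M.xi u ω

/-- Left endpoints: `l_∅ = 0`, `l_{ui} = l_u + ξ_u (ξ̃_{u1} + ⋯ + ξ̃_{u(i-1)})`. -/
def lpos (M : FragModel Ω P q ν) : List ℕ → Ω → ℝ
  | [] => fun _ => 0
  | i :: u => fun ω => M.lpos u ω + M.xi u ω * ∑ j ∈ Finset.range i, (M.xit u ω).1 j

/-- Tag sets: `A_u = {k : Y_k ∈ [l_u, l_u + ξ_u)}`. -/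
def tagSet (M : FragModel Ω P q ν) (u : List ℕ) (ω : Ω) : Finset (Fin q) :=
  Finset.univ.filter fun k => M.Y k ω ∈ Set.Ico (M.lpos u ω) (M.lpos u ω + M.xi u ω)

/-- `S_n^{(i)} = -log ξ_u` for the (a.s. unique) node `u` of generation `n` carrying
tag `i`. -/
def Sgen (M : FragModel Ω P q ν) (n : ℕ) (i : Fin q) (ω : Ω) : ℝ :=
  sInf {x | ∃ u : List ℕ, u.length = n ∧ i ∈ M.tagSet u ω ∧ x = -Real.log (M.xi u ω)}

/-- Residual lifetime of the fragment carrying tag `i`: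
`B_t^{(i)} = inf {S_n^{(i)} : S_n^{(i)} > t} - t`. -/
def Bres (M : FragModel Ω P q ν) (t : ℝ) (i : Fin q) (ω : Ω) : ℝ :=
  sInf {x | ∃ n : ℕ, x = M.Sgen n i ω ∧ t < x} - t

/-- The tree `𝒯₁`: nodes with at least one tag whose parent is still of size `≥ ε`,
together with the root. -/
def Tone (M : FragModel Ω P q ν) (ε : ℝ) (ω : Ω) : Set (List ℕ) :=
  {u | u ≠ [] ∧ M.tagSet u ω ≠ ∅ ∧ ε ≤ M.xi u.tail ω} ∪ {[]}

/-- Leaves of a subtree of the genealogical tree. -/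
def leavesOf (T : Set (List ℕ)) : Set (List ℕ) := {u ∈ T | ∀ i : ℕ, (i :: u) ∉ T}

/-- The nodes of `𝒯₁` alive at time `t`:
`S(t) = {u ∈ 𝒯₁ : -log ξ_{a(u)} ≤ t < -log ξ_u}`. -/
def Sliv (M : FragModel Ω P q ν) (ε t : ℝ) (ω : Ω) : Set (List ℕ) :=
  {u | u ∈ M.Tone ε ω ∧ -Real.log (M.xi u.tail ω) ≤ t ∧ t < -Real.log (M.xi u ω)}

/-- `L_t = ∑_{u ∈ S(t)} (#A_u - 1)`. -/
def Lsum (M : FragModel Ω P q ν) (ε t : ℝ) (ω : Ω) : ℝ :=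
  ∑' u : List ℕ, if u ∈ M.Sliv ε t ω then ((M.tagSet u ω).card : ℝ) - 1 else 0

/-- `∑_{u ∈ S(t)} 1_{#A_u = 1}`. -/
def Nsing (M : FragModel Ω P q ν) (ε t : ℝ) (ω : Ω) : ℝ :=
  ∑' u : List ℕ, if u ∈ M.Sliv ε t ω ∧ (M.tagSet u ω).card = 1 then (1 : ℝ) else 0

/-- The event `C_{k,l}(t)`. -/
def Ckl (M : FragModel Ω P q ν) (ε t : ℝ) (k l : ℕ) : Set Ω :=
  {ω | M.Nsing ε t ω = k ∧ M.Lsum ε t ω = l}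

/-- The tree `𝒯₂`: nodes of `𝒯₁` whose parent carries at least two tags, together
with the root. -/
def Ttwo (M : FragModel Ω P q ν) (ε : ℝ) (ω : Ω) : Set (List ℕ) :=
  {u | u ∈ M.Tone ε ω ∧ u ≠ [] ∧ 2 ≤ (M.tagSet u.tail ω).card} ∪ {[]}

/-- `ℒ₂`: leaves of `𝒯₂` carrying exactly one tag. -/
def Ltwo (M : FragModel Ω P q ν) (ε : ℝ) (ω : Ω) : Set (List ℕ) :=
  {u | u ∈ M.Ttwo ε ω ∧ (∀ i : ℕ, (i :: u) ∉ M.Ttwo ε ω) ∧ (M.tagSet u ω).card = 1}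

/-- The σ-algebra `σ(ℒ₂)` generated by the random set `ℒ₂`. -/
def sigmaLtwo (M : FragModel Ω P q ν) (ε : ℝ) : MeasurableSpace Ω :=
  MeasurableSpace.comap (fun ω => M.Ltwo ε ω)
    (@MeasurableSpace.pi (List ℕ) (fun _ => Prop) (fun _ => ⊤))

/-- The frozen fragments: `𝒰_ε = {u : ξ_{a(u)} ≥ ε > ξ_u}`. -/
def Ueps (M : FragModel Ω P q ν) (ε : ℝ) (ω : Ω) : Set (List ℕ) :=
  {u | ε ≤ M.xi u.tail ω ∧ M.xi u ω < ε}

/-- The empirical measure applied to `f` : `γ_T(f) = ∑_{u ∈ 𝒰_ε} ξ_u f(ξ_u/ε)`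
(`T = -log ε`). -/
def gammaT (M : FragModel Ω P q ν) (ε : ℝ) (f : ℝ → ℝ) (ω : Ω) : ℝ :=
  ∑' u : List ℕ, if u ∈ M.Ueps ε ω then M.xi u ω * f (M.xi u ω / ε) else 0

end FragModel

/-- Membership in `ℬ⁰_sym(1)`: bounded, measurable, centered for `η`. -/
def memB0 (π : Measure ℝ) (μ : ℝ) (f : ℝ → ℝ) : Prop :=
  Measurable f ∧ (∃ C : ℝ, ∀ x, |f x| ≤ C) ∧ etaF π μ f = 0

/-- The symmetrized tensor product `(f₁ ⊗ ⋯ ⊗ f_q)_sym`. -/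
def tensSym (q : ℕ) (f : Fin q → ℝ → ℝ) (x : Fin q → ℝ) : ℝ :=
  (1 / (Nat.factorial q : ℝ)) * ∑ σ : Equiv.Perm (Fin q), ∏ i, f (σ i) (x i)

/-- `K₁(q) = ∑_{i=1}^q q!/(q-i)!`. -/
def K1 (q : ℕ) : ℝ := ∑ i ∈ Finset.Icc 1 q, (Nat.factorial q : ℝ) / (Nat.factorial (q - i))

/-!
On the event `L_t ≥ k`, a fragment `u` alive at time `t` holds `#A_u - 1` tags that share it
with a smaller tag, so some map `g` with `g j ≤ j` moves at least `k` tags, each moved `Y_j`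
lying in the live fragment that contains `Y_{g j}`. For a fixed `g`, imposing this for the
largest moved tag `a` costs a factor `e^{-t}`: `Y_a` is uniform and independent of everything
else, and the fragments alive at time `t` are disjoint intervals of length `< e^{-t}`. There are
`q!` maps with `g j ≤ j`, and for `t = αT` we get `e^{-tk} = ε^{αk} ≤ ε^{q/2}`.
-/

namespace List

variable {α : Type*}

lemma prefix_or_prefix_or_exists_diverge : ∀ a b : List α, a <+: b ∨ b <+: a ∨
    ∃ c a' b' x y, x ≠ y ∧ a = c ++ x :: a' ∧ b = c ++ y :: b'
  | [], _ => .inl (nil_prefix)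
  | _, [] => .inr (.inl nil_prefix)
  | x :: a, y :: b => by
    by_cases hxy : x = y
    · subst hxy
      rcases prefix_or_prefix_or_exists_diverge a b with h | h | ⟨c, a', b', z, w, hzw, rfl, rfl⟩
      · exact .inl (cons_prefix_cons.mpr ⟨rfl, h⟩)
      · exact .inr (.inl (cons_prefix_cons.mpr ⟨rfl, h⟩))
      · exact .inr (.inr ⟨x :: c, a', b', z, w, hzw, rfl, rfl⟩)
    · exact .inr (.inr ⟨[], a, b, x, y, hxy, rfl, rfl⟩)

lemma suffix_or_suffix_or_exists_diverge (a b : List α) : a <:+ b ∨ b <:+ a ∨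
    ∃ c a' b' x y, x ≠ y ∧ a = a' ++ x :: c ∧ b = b' ++ y :: c := by
  rcases prefix_or_prefix_or_exists_diverge a.reverse b.reverse with
    h | h | ⟨c, a', b', x, y, hxy, ha, hb⟩
  · exact .inl (reverse_prefix.mp h)
  · exact .inr (.inl (reverse_prefix.mp h))
  · refine .inr (.inr ⟨c.reverse, a'.reverse, b'.reverse, x, y, hxy, ?_, ?_⟩)
    · simpa using congrArg reverse ha
    · simpa using congrArg reverse hb

end List

lemma ProbabilityTheory.iIndepFun.indepFun_of_measurable_iSup {ι Ω γ : Type*} {β : ι → Type*}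
    [mΩ : MeasurableSpace Ω] {μ : Measure Ω} [m : ∀ i, MeasurableSpace (β i)] [MeasurableSpace γ]
    {f : ∀ i, Ω → β i} (hf : ∀ i, Measurable (f i)) (hind : iIndepFun f μ) {S : Set ι} {j : ι}
    (hj : j ∉ S) {W : Ω → γ} (hW : Measurable[⨆ i ∈ S, (m i).comap (f i)] W) :
    IndepFun W (f j) μ := by
  have h := indep_iSup_of_disjoint (fun i => (hf i).comap_le) hind.iIndep
    (Set.disjoint_singleton_right.mpr hj)
  rw [iSup_singleton] at h
  rw [IndepFun_iff_Indep]
  exact indep_of_indep_of_le_left h hW.comap_le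

lemma measurable_prodMk_update {Ω ι κ β γ : Type*} [DecidableEq κ] {m : MeasurableSpace Ω}
    [MeasurableSpace β] [MeasurableSpace γ] {X : ι → Ω → β} {Y : κ → Ω → γ} {a : κ}
    (hX : ∀ i, Measurable (X i)) (hY : ∀ i ≠ a, Measurable (Y i)) (c : γ) :
    Measurable fun ω => (fun i => X i ω, Function.update (fun i => Y i ω) a c) := by
  refine (measurable_pi_lambda _ hX).prodMk (measurable_pi_lambda _ fun i => ?_)
  by_cases hi : i = a
  · subst hi
    simpa only [Function.update_self] using measurable_const
  · simpa only [ne_eq, hi, not_false_eq_true, Function.update_of_ne] using hY i hi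

lemma ProbabilityTheory.IndepFun.measure_preimage_le {Ω β γ : Type*} [MeasurableSpace Ω]
    [MeasurableSpace β] [MeasurableSpace γ] {μ : Measure Ω} [IsFiniteMeasure μ] {W : Ω → β}
    {X : Ω → γ} (hind : IndepFun W X μ) (hW : Measurable W) (hX : Measurable X)
    {C : Set (β × γ)} (hC : MeasurableSet C) {D : Set β} (hD : MeasurableSet D)
    (hCD : C ⊆ Prod.fst ⁻¹' D) {c : ENNReal} (hslice : ∀ w ∈ D, μ.map X (Prod.mk w ⁻¹' C) ≤ c) :
    μ ((fun ω => (W ω, X ω)) ⁻¹' C) ≤ c * μ (W ⁻¹' D) := by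
  have hslice' w : μ.map X (Prod.mk w ⁻¹' C) ≤ D.indicator (fun _ => c) w := by
    by_cases hw : w ∈ D
    · simpa [hw] using hslice w hw
    · have : Prod.mk w ⁻¹' C = ∅ := eq_empty_of_forall_notMem fun _ hy => hw (hCD hy)
      simp [this]
  calc μ ((fun ω => (W ω, X ω)) ⁻¹' C) = (μ.map W).prod (μ.map X) C := by
        rw [← (indepFun_iff_map_prod_eq_prod_map_map hW.aemeasurable hX.aemeasurable).mp hind,
          Measure.map_apply (hW.prodMk hX) hC]
    _ = ∫⁻ w, μ.map X (Prod.mk w ⁻¹' C) ∂μ.map W := Measure.prod_apply hC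
    _ ≤ ∫⁻ w, D.indicator (fun _ => c) w ∂μ.map W := lintegral_mono hslice'
    _ = c * μ (W ⁻¹' D) := by rw [lintegral_indicator_const hD, Measure.map_apply hW hD]

lemma exists_partner_map {ι α : Type*} [LinearOrder α] [Fintype α] {F : Finset ι}
    {A : ι → Finset α} (hA : (F : Set ι).PairwiseDisjoint A) :
    ∃ g : α → α, (∀ j, g j ≤ j) ∧ (∀ j, g j < j → ∃ u ∈ F, j ∈ A u ∧ g j ∈ A u) ∧
      ∑ u ∈ F, ((A u).card - 1 : ℝ) ≤ (Finset.univ.filter fun j => g j < j).card := by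
  classical
  have hpartner j : ∃ i, i ≤ j ∧ (i < j → ∃ u ∈ F, j ∈ A u ∧ i ∈ A u) ∧
      ((∃ u ∈ F, j ∈ A u ∧ ∃ i ∈ A u, i < j) → i < j) := by
    by_cases h : ∃ u ∈ F, j ∈ A u ∧ ∃ i ∈ A u, i < j
    · obtain ⟨u, hu, hj, i, hi, hij⟩ := h
      exact ⟨i, hij.le, fun _ => ⟨u, hu, hj, hi⟩, fun _ => hij⟩
    · exact ⟨j, le_rfl, fun h => absurd h (lt_irrefl j), fun h' => absurd h' h⟩
  choose g hle hsame hlt using hpartner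
  refine ⟨g, hle, hsame, ?_⟩
  set B : ι → Finset α := fun u => (A u).filter fun j => ∃ i ∈ A u, i < j
  have hB u : ((A u).card - 1 : ℝ) ≤ (B u).card := by
    have hmin : ((A u).filter fun j => ¬∃ i ∈ A u, i < j).card ≤ 1 :=
      Finset.card_le_one.mpr fun x hx y hy => by
        simp only [Finset.mem_filter, not_exists, not_and, not_lt] at hx hy
        exact le_antisymm (hx.2 y hy.1) (hy.2 x hx.1)
    have := Finset.card_filter_add_card_filter_not (s := A u) (fun j => ∃ i ∈ A u, i < j)
    have : (A u).card ≤ (B u).card + 1 := by dsimp only [B]; omega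
    linarith [(Nat.cast_le (α := ℝ)).mpr this, Nat.cast_add_one (R := ℝ) (B u).card]
  calc ∑ u ∈ F, ((A u).card - 1 : ℝ) ≤ ∑ u ∈ F, ((B u).card : ℝ) :=
        Finset.sum_le_sum fun u _ => hB u
    _ = (F.biUnion B).card := by
      rw [Finset.card_biUnion (hA.mono fun u => Finset.filter_subset _ _)]
      push_cast
      rfl
    _ ≤ _ := by
      refine Nat.cast_le.mpr (Finset.card_le_card fun j hj => ?_)
      obtain ⟨u, hu, hjB⟩ := Finset.mem_biUnion.mp hj
      obtain ⟨hju, hi⟩ := Finset.mem_filter.mp hjB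
      exact Finset.mem_filter.mpr ⟨Finset.mem_univ j, hlt j ⟨u, hu, hju, hi⟩⟩

lemma card_filter_le_self_eq_factorial (q : ℕ) :
    (Finset.univ.filter fun g : Fin q → Fin q => ∀ j, g j ≤ j).card = q.factorial := by
  rw [← Fintype.card_subtype,
    Fintype.card_congr
      (Equiv.subtypePiEquivPi (β := fun _ : Fin q => Fin q) (p := fun j i => i ≤ j)),
    Fintype.card_pi]
  simp only [Fintype.card_subtype, Finset.filter_ge_eq_Iic, Fin.card_Iic]
  rw [Fin.prod_univ_eq_prod_range (fun i => i + 1) q]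
  exact Finset.prod_range_add_one_eq_factorial q

namespace Sdown

variable (s : Sdown)

lemma nonneg (i : ℕ) : 0 ≤ s.1 i := s.2.2.1 i

lemma sum_range_nonneg (n : ℕ) : 0 ≤ ∑ i ∈ Finset.range n, s.1 i :=
  Finset.sum_nonneg fun i _ => s.nonneg i

lemma sum_range_le_one (n : ℕ) : ∑ i ∈ Finset.range n, s.1 i ≤ 1 := s.2.2.2 n

lemma sum_range_mono {m n : ℕ} (h : m ≤ n) :
    ∑ i ∈ Finset.range m, s.1 i ≤ ∑ i ∈ Finset.range n, s.1 i :=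
  Finset.sum_le_sum_of_subset_of_nonneg (Finset.range_subset_range.mpr h)
    fun i _ _ => s.nonneg i

lemma le_one (i : ℕ) : s.1 i ≤ 1 := by
  have h := s.sum_range_le_one (i + 1)
  rw [Finset.sum_range_succ] at h
  linarith [s.sum_range_nonneg i]

end Sdown

/- `size φ u` and `left φ u` are `ξ_u` and `l_u` computed from a fixed family `φ = (ξ̃_v)_v` of
ratio sequences (`FragModel.xi_eq_size`, `FragModel.lpos_eq_left`), so that the events below are
preimages of measurable sets of families under `ω ↦ (ξ̃_v(ω))_v`. -/
namespace Fragmentation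

variable (φ : List ℕ → Sdown)

def size : List ℕ → ℝ
  | [] => 1
  | i :: u => (φ u).1 i * size u

def left : List ℕ → ℝ
  | [] => 0
  | i :: u => left u + size φ u * ∑ j ∈ Finset.range i, (φ u).1 j

def interval (u : List ℕ) : Set ℝ := Ico (left φ u) (left φ u + size φ u)

def IsAlive (t : ℝ) (u : List ℕ) : Prop :=
  -Real.log (size φ u.tail) ≤ t ∧ t < -Real.log (size φ u)

def SameAliveFragment (t x y : ℝ) : Prop :=
  ∃ u, IsAlive φ t u ∧ x ∈ interval φ u ∧ y ∈ interval φ u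

variable {φ}

lemma size_nonneg : ∀ u, 0 ≤ size φ u
  | [] => zero_le_one
  | i :: u => mul_nonneg ((φ u).nonneg i) (size_nonneg u)

lemma size_cons_le (i : ℕ) (u : List ℕ) : size φ (i :: u) ≤ size φ u :=
  mul_le_of_le_one_left (size_nonneg u) ((φ u).le_one i)

lemma size_append_le (v u : List ℕ) : size φ (v ++ u) ≤ size φ u := by
  induction v with
  | nil => rfl
  | cons i v ih => exact (size_cons_le i _).trans ih

lemma left_cons_add_size_cons (i : ℕ) (u : List ℕ) :
    left φ (i :: u) + size φ (i :: u) =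
      left φ u + size φ u * ∑ j ∈ Finset.range (i + 1), (φ u).1 j := by
  simp only [left, size, Finset.sum_range_succ]
  ring

lemma interval_cons_subset (i : ℕ) (u : List ℕ) : interval φ (i :: u) ⊆ interval φ u := by
  refine Ico_subset_Ico ?_ ?_
  · exact le_add_of_nonneg_right (mul_nonneg (size_nonneg u) ((φ u).sum_range_nonneg i))
  · rw [left_cons_add_size_cons]
    gcongr
    exact mul_le_of_le_one_right (size_nonneg u) ((φ u).sum_range_le_one _)

lemma interval_append_subset (v u : List ℕ) : interval φ (v ++ u) ⊆ interval φ u := by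
  induction v with
  | nil => rfl
  | cons i v ih => exact (interval_cons_subset i _).trans ih

lemma disjoint_interval_cons_of_lt {i j : ℕ} (hij : i < j) (u : List ℕ) :
    Disjoint (interval φ (i :: u)) (interval φ (j :: u)) := by
  refine Set.disjoint_left.mpr fun x hxi hxj => ?_
  have hgap : left φ (i :: u) + size φ (i :: u) ≤ left φ (j :: u) := by
    rw [left_cons_add_size_cons, left]
    exact add_le_add_right (mul_le_mul_of_nonneg_left ((φ u).sum_range_mono hij) (size_nonneg u)) _
  linarith [hxi.2, hxj.1]

lemma disjoint_interval_cons {i j : ℕ} (hij : i ≠ j) (u : List ℕ) :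
    Disjoint (interval φ (i :: u)) (interval φ (j :: u)) := by
  rcases hij.lt_or_gt with h | h
  · exact disjoint_interval_cons_of_lt h u
  · exact (disjoint_interval_cons_of_lt h u).symm

variable {t : ℝ} {u w : List ℕ}

lemma IsAlive.size_pos (ht : 0 ≤ t) (hu : IsAlive φ t u) : 0 < size φ u := by
  refine (size_nonneg u).lt_of_ne fun h => ?_
  have := hu.2
  rw [← h, Real.log_zero, neg_zero] at this
  linarith

lemma IsAlive.size_lt (ht : 0 ≤ t) (hu : IsAlive φ t u) : size φ u < Real.exp (-t) :=
  (Real.log_lt_iff_lt_exp (hu.size_pos ht)).mp (by linarith [hu.2])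

lemma IsAlive.exp_le_size_tail (ht : 0 ≤ t) (hu : IsAlive φ t u) :
    Real.exp (-t) ≤ size φ u.tail := by
  have hpos : 0 < size φ u.tail := by
    cases u with
    | nil => exact hu.size_pos ht
    | cons i v => exact (hu.size_pos ht).trans_le (size_cons_le i v)
  exact (Real.le_log_iff_exp_le hpos).mp (by linarith [hu.1])

lemma IsAlive.eq_of_suffix (ht : 0 ≤ t) (hu : IsAlive φ t u) (hw : IsAlive φ t w)
    (h : u <:+ w) : u = w := by
  obtain ⟨r, rfl⟩ := h
  cases r with
  | nil => rfl
  | cons i r =>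
    have := hw.exp_le_size_tail ht
    rw [List.cons_append, List.tail_cons] at this
    linarith [size_append_le (φ := φ) r u, hu.size_lt ht]

lemma disjoint_interval_of_isAlive (ht : 0 ≤ t) (hu : IsAlive φ t u) (hw : IsAlive φ t w)
    (hne : u ≠ w) : Disjoint (interval φ u) (interval φ w) := by
  rcases u.suffix_or_suffix_or_exists_diverge w with h | h | ⟨c, u', w', i, j, hij, rfl, rfl⟩
  · exact absurd (hu.eq_of_suffix ht hw h) hne
  · exact absurd (hw.eq_of_suffix ht hu h).symm hne
  · exact (disjoint_interval_cons hij c).mono (interval_append_subset _ _)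
      (interval_append_subset _ _)

lemma volume_setOf_sameAliveFragment_le (ht : 0 ≤ t) (x : ℝ) :
    volume {y | SameAliveFragment φ t y x} ≤ ENNReal.ofReal (Real.exp (-t)) := by
  by_cases hx : ∃ u, IsAlive φ t u ∧ x ∈ interval φ u
  · obtain ⟨u, hu, hxu⟩ := hx
    have hsub : {y | SameAliveFragment φ t y x} ⊆ interval φ u := by
      rintro y ⟨w, hw, hyw, hxw⟩
      obtain rfl : w = u := by_contra fun hne =>
        Set.disjoint_left.mp (disjoint_interval_of_isAlive ht hw hu hne) hxw hxu
      exact hyw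
    calc volume {y | SameAliveFragment φ t y x} ≤ volume (interval φ u) := measure_mono hsub
      _ = ENNReal.ofReal (size φ u) := by rw [interval, Real.volume_Ico, add_sub_cancel_left]
      _ ≤ ENNReal.ofReal (Real.exp (-t)) := ENNReal.ofReal_le_ofReal (hu.size_lt ht).le
  · have hempty : {y | SameAliveFragment φ t y x} = ∅ :=
      Set.eq_empty_of_forall_notMem fun y ⟨u, hu, _, hxu⟩ => hx ⟨u, hu, hxu⟩
    simp [hempty]

section

variable {β ι : Type*} [MeasurableSpace β]

lemma measurable_ratio (u : List ℕ) (i : ℕ) : Measurable fun φ : List ℕ → Sdown => (φ u).1 i :=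
  (measurable_pi_apply i).comp (measurable_subtype_coe.comp (measurable_pi_apply u))

lemma measurable_size : ∀ u, Measurable fun φ : List ℕ → Sdown => size φ u
  | [] => measurable_const
  | i :: u => (measurable_ratio u i).mul (measurable_size u)

lemma measurable_left : ∀ u, Measurable fun φ : List ℕ → Sdown => left φ u
  | [] => measurable_const
  | i :: u => (measurable_left u).add
      ((measurable_size u).mul
        (Finset.measurable_sum (Finset.range i) fun j _ => measurable_ratio u j))

lemma measurableSet_sameAliveFragment {F : β → List ℕ → Sdown} {X Y : β → ℝ}
    (hF : Measurable F) (hX : Measurable X) (hY : Measurable Y) (t : ℝ) :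
    MeasurableSet {b | SameAliveFragment (F b) t (X b) (Y b)} := by
  have hs u : Measurable fun b => size (F b) u := (measurable_size u).comp hF
  have hl u : Measurable fun b => left (F b) u := (measurable_left u).comp hF
  have hlog u : Measurable fun b => -Real.log (size (F b) u) :=
    (Real.measurable_log.comp (hs u)).neg
  simp only [SameAliveFragment, IsAlive, interval, mem_Ico, ofPred_exists, ofPred_and]
  exact MeasurableSet.iUnion fun u =>
    ((measurableSet_le (hlog _) measurable_const).inter
        (measurableSet_lt measurable_const (hlog _))).inter
      (((measurableSet_le (hl u) hX).inter (measurableSet_lt hX ((hl u).add (hs u)))).inter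
        ((measurableSet_le (hl u) hY).inter (measurableSet_lt hY ((hl u).add (hs u)))))

def pairedSet (t : ℝ) (J : Finset ι) (g : ι → ι) : Set ((List ℕ → Sdown) × (ι → ℝ)) :=
  {w | ∀ j ∈ J, SameAliveFragment w.1 t (w.2 j) (w.2 (g j))}

lemma measurableSet_pairedSet (t : ℝ) (J : Finset ι) (g : ι → ι) :
    MeasurableSet (pairedSet t J g) := by
  have h : pairedSet t J g = ⋂ j ∈ J, {w | SameAliveFragment w.1 t (w.2 j) (w.2 (g j))} := by
    ext w
    simp [pairedSet]
  rw [h]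
  exact Finset.measurableSet_biInter J fun j _ => measurableSet_sameAliveFragment measurable_fst
    ((measurable_pi_apply j).comp measurable_snd)
    ((measurable_pi_apply (g j)).comp measurable_snd) t

end

end Fragmentation

namespace FragModel

open Fragmentation

variable {Ω : Type*} [MeasurableSpace Ω] {P : Measure Ω} {q : ℕ} {ν : Measure Sdown}
  (M : FragModel Ω P q ν)

def ratios (ω : Ω) : List ℕ → Sdown := fun u => M.xit u ω

lemma xi_eq_size (ω : Ω) : ∀ u, M.xi u ω = size (M.ratios ω) u
  | [] => rfl
  | i :: u => congrArg ((M.xit u ω).1 i * ·) (xi_eq_size ω u)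

lemma lpos_eq_left (ω : Ω) : ∀ u, M.lpos u ω = left (M.ratios ω) u
  | [] => rfl
  | i :: u => by
    simp only [lpos, left, lpos_eq_left ω u, M.xi_eq_size ω u]
    rfl

variable {M} {ε t : ℝ} {ω : Ω} {u : List ℕ}

lemma mem_tagSet_iff {j : Fin q} : j ∈ M.tagSet u ω ↔ M.Y j ω ∈ interval (M.ratios ω) u := by
  simp [tagSet, interval, M.xi_eq_size, M.lpos_eq_left]

lemma isAlive_of_mem_Sliv (hu : u ∈ M.Sliv ε t ω) : IsAlive (M.ratios ω) t u := by
  simpa only [IsAlive, ← M.xi_eq_size] using hu.2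

lemma tagSet_nonempty_of_mem_Sliv (ht : 0 ≤ t) (hu : u ∈ M.Sliv ε t ω) :
    (M.tagSet u ω).Nonempty := by
  rcases hu.1 with ⟨-, hne, -⟩ | rfl
  · exact Finset.nonempty_iff_ne_empty.mpr hne
  · exact absurd hu.2.2 (by simp [xi, ht])

lemma pairwiseDisjoint_tagSet (ht : 0 ≤ t) :
    (M.Sliv ε t ω).PairwiseDisjoint (M.tagSet · ω) := fun _ hu _ hw hne =>
  Finset.disjoint_left.mpr fun _ hju hjw => Set.disjoint_left.mp
    (disjoint_interval_of_isAlive ht (isAlive_of_mem_Sliv hu) (isAlive_of_mem_Sliv hw) hne)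
    (mem_tagSet_iff.mp hju) (mem_tagSet_iff.mp hjw)

lemma finite_Sliv (ht : 0 ≤ t) : (M.Sliv ε t ω).Finite := by
  refine (Set.toFinite ((M.tagSet · ω) '' M.Sliv ε t ω)).of_finite_image
    fun u hu w hw h => by_contra fun hne => ?_
  have hdisj : Disjoint (M.tagSet u ω) (M.tagSet w ω) := pairwiseDisjoint_tagSet ht hu hw hne
  rw [show M.tagSet u ω = M.tagSet w ω from h, disjoint_self, Finset.bot_eq_empty] at hdisj
  exact (tagSet_nonempty_of_mem_Sliv ht hw).ne_empty hdisj

lemma Lsum_eq_sum {F : Finset (List ℕ)} (hF : ↑F = M.Sliv ε t ω) :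
    M.Lsum ε t ω = ∑ u ∈ F, ((M.tagSet u ω).card - 1 : ℝ) := by
  rw [Lsum, tsum_eq_sum fun u hu => if_neg (by rwa [← hF])]
  exact Finset.sum_congr rfl fun u hu => if_pos (by rwa [← hF])

variable (M) in
def pairedEvent (t : ℝ) (J : Finset (Fin q)) (g : Fin q → Fin q) : Set Ω :=
  {ω | ∀ j ∈ J, SameAliveFragment (M.ratios ω) t (M.Y j ω) (M.Y (g j) ω)}

lemma exists_partner_map_of_le_Lsum (ht : 0 ≤ t) {k : ℕ} (h : (k : ℝ) ≤ M.Lsum ε t ω) :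
    ∃ g : Fin q → Fin q, (∀ j, g j ≤ j) ∧ k ≤ (Finset.univ.filter fun j => g j < j).card ∧
      ω ∈ M.pairedEvent t (Finset.univ.filter fun j => g j < j) g := by
  obtain ⟨F, hF⟩ := (finite_Sliv (M := M) (ε := ε) (ω := ω) ht).exists_finset_coe
  have hdisj := pairwiseDisjoint_tagSet (M := M) (ε := ε) (ω := ω) ht
  rw [← hF] at hdisj
  obtain ⟨g, hle, hpartner, hcard⟩ := exists_partner_map hdisj
  refine ⟨g, hle, ?_, fun j hj => ?_⟩
  · exact_mod_cast (h.trans_eq (Lsum_eq_sum hF)).trans hcard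
  · obtain ⟨u, hu, hju, hgu⟩ := hpartner j (Finset.mem_filter.mp hj).2
    exact ⟨u, isAlive_of_mem_Sliv (hF ▸ Finset.mem_coe.mpr hu),
      mem_tagSet_iff.mp hju, mem_tagSet_iff.mp hgu⟩

variable (M) in
lemma indepFun_ratios_update_Y (a : Fin q) :
    IndepFun (fun ω => (M.ratios ω, Function.update (fun i => M.Y i ω) a 0)) (M.Y a) P := by
  have hmeas : ∀ i, @Measurable Ω (FragTgt q i) _ (fragTgtMS q i) (fragFam q M.xit M.Y i)
    | .inl u => M.meas_xit u
    | .inr i => M.meas_Y i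
  have hS i (hi : i ≠ Sum.inr a) : @Measurable Ω (FragTgt q i)
      (⨆ i ∈ {i | i ≠ Sum.inr a}, (fragTgtMS q i).comap (fragFam q M.xit M.Y i))
      (fragTgtMS q i) (fragFam q M.xit M.Y i) :=
    Measurable.of_comap_le (le_iSup₂ (f := fun i (_ : i ∈ {i | i ≠ Sum.inr a}) =>
      (fragTgtMS q i).comap (fragFam q M.xit M.Y i)) i hi)
  exact M.indep.indepFun_of_measurable_iSup hmeas (S := {i | i ≠ Sum.inr a}) (j := Sum.inr a)
    (fun h => h rfl) (measurable_prodMk_update (fun u => hS (.inl u) Sum.inl_ne_inr)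
      (fun i hi => hS (.inr i) (by simpa using hi)) 0)

lemma measure_pairedEvent_insert_le [IsFiniteMeasure P] (ht : 0 ≤ t) {J : Finset (Fin q)}
    {g : Fin q → Fin q} {a : Fin q} (hga : g a ≠ a) (hJ : ∀ j ∈ J, j ≠ a ∧ g j ≠ a) :
    P (M.pairedEvent t (insert a J) g) ≤
      ENNReal.ofReal (Real.exp (-t)) * P (M.pairedEvent t J g) := by
  set W := fun ω => (M.ratios ω, Function.update (fun i => M.Y i ω) a 0)
  have hW : Measurable W := measurable_prodMk_update M.meas_xit (fun i _ => M.meas_Y i) 0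
  set D := pairedSet t J g
  set C : Set (((List ℕ → Sdown) × (Fin q → ℝ)) × ℝ) :=
    {p | p.1 ∈ D ∧ SameAliveFragment p.1.1 t p.2 (p.1.2 (g a))}
  have hC : MeasurableSet C := ((measurableSet_pairedSet t J g).preimage measurable_fst).inter
    (measurableSet_sameAliveFragment (measurable_fst.comp measurable_fst) measurable_snd
      ((measurable_pi_apply _).comp (measurable_snd.comp measurable_fst)) t)
  have hWD : W ⁻¹' D = M.pairedEvent t J g := by
    ext ω
    refine forall₂_congr fun j hj => ?_
    simp only [W, Function.update_of_ne (hJ j hj).1, Function.update_of_ne (hJ j hj).2]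
  have hWC : (fun ω => (W ω, M.Y a ω)) ⁻¹' C = M.pairedEvent t (insert a J) g := by
    ext ω
    have hωD : W ω ∈ D ↔ ω ∈ M.pairedEvent t J g := Set.ext_iff.mp hWD ω
    simp only [C, mem_preimage, mem_ofPred_eq, hωD, pairedEvent, Finset.forall_mem_insert]
    simp only [W, Function.update_of_ne hga, and_comm]
  rw [← hWC, ← hWD]
  refine (M.indepFun_ratios_update_Y a).measure_preimage_le hW (M.meas_Y a) hC
    (measurableSet_pairedSet t J g) (fun p hp => hp.1) fun w _ => ?_
  rw [M.law_Y a]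
  exact (Measure.restrict_apply_le _ _).trans ((measure_mono fun y hy => hy.2).trans
    (volume_setOf_sameAliveFragment_le (φ := w.1) ht (w.2 (g a))))

lemma measure_pairedEvent_le [IsProbabilityMeasure P] (ht : 0 ≤ t) (J : Finset (Fin q))
    {g : Fin q → Fin q} (hg : ∀ j ∈ J, g j < j) :
    P (M.pairedEvent t J g) ≤ ENNReal.ofReal (Real.exp (-t)) ^ J.card := by
  induction J using Finset.induction_on_max with
  | empty => exact prob_le_one.trans_eq (pow_zero _).symm
  | insert a J ha ih =>
    have haJ : a ∉ J := fun h => lt_irrefl a (ha a h)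
    rw [Finset.card_insert_of_notMem haJ, pow_succ']
    have hgJ j (hj : j ∈ J) : g j < j := hg j (Finset.mem_insert_of_mem hj)
    refine (measure_pairedEvent_insert_le ht (hg a (Finset.mem_insert_self a J)).ne
      fun j hj => ⟨(ha j hj).ne, ((hgJ j hj).trans (ha j hj)).ne⟩).trans ?_
    gcongr
    exact ih hgJ

variable (M) in
theorem measure_Lsum_ge_le [IsProbabilityMeasure P] (ht : 0 ≤ t) (k : ℕ) :
    P {ω | (k : ℝ) ≤ M.Lsum ε t ω} ≤ q.factorial * ENNReal.ofReal (Real.exp (-t)) ^ k := by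
  set c := ENNReal.ofReal (Real.exp (-t))
  set J := fun g : Fin q → Fin q => Finset.univ.filter fun j => g j < j
  set G := Finset.univ.filter fun g : Fin q → Fin q => ∀ j, g j ≤ j
  have hc : c ≤ 1 := ENNReal.ofReal_le_one.mpr (Real.exp_le_one_iff.mpr (by linarith))
  have hcover : {ω | (k : ℝ) ≤ M.Lsum ε t ω} ⊆
      ⋃ g ∈ G.filter fun g => k ≤ (J g).card, M.pairedEvent t (J g) g := fun ω hω => by
    obtain ⟨g, hle, hk, hωg⟩ := exists_partner_map_of_le_Lsum ht hω
    exact mem_biUnion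
      (Finset.mem_filter.mpr ⟨Finset.mem_filter.mpr ⟨Finset.mem_univ g, hle⟩, hk⟩) hωg
  calc P {ω | (k : ℝ) ≤ M.Lsum ε t ω}
      ≤ ∑ g ∈ G.filter fun g => k ≤ (J g).card, P (M.pairedEvent t (J g) g) :=
        (measure_mono hcover).trans (measure_biUnion_finset_le _ _)
    _ ≤ ∑ g ∈ G.filter fun g => k ≤ (J g).card, c ^ k := Finset.sum_le_sum fun g hg =>
        (measure_pairedEvent_le ht _ fun j hj => (Finset.mem_filter.mp hj).2).trans
          (pow_le_pow_right_of_le_one' hc (Finset.mem_filter.mp hg).2)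
    _ ≤ ∑ g ∈ G, c ^ k := Finset.sum_le_sum_of_subset (Finset.filter_subset _ _)
    _ = q.factorial * c ^ k := by
        rw [Finset.sum_const, card_filter_le_self_eq_factorial, nsmul_eq_mul]

end FragModel

lemma factorial_le_K1 {q : ℕ} (hq : 0 < q) : (q.factorial : ℝ) ≤ K1 q := by
  simpa [K1] using Finset.single_le_sum (f := fun i => (q.factorial : ℝ) / (q - i).factorial)
    (fun i _ => by positivity) (Finset.mem_Icc.mpr ⟨hq, le_rfl⟩)

theorem stmt8_general
    {Ω : Type*} [MeasurableSpace Ω] (P : Measure Ω) [IsProbabilityMeasure P]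
    (ν : Measure Sdown)
    (q : ℕ) (hq : 0 < q)
    (M : FragModel Ω P q ν)
    (k : ℕ) (hk : (q : ℝ) / 2 ≤ k)
    (α : ℝ) (hα : α ∈ Set.Icc ((q : ℝ) / (2 * k)) 1)
    (ε : ℝ) (hε : ε ∈ Set.Ioo (0 : ℝ) 1) :
    (P {ω | (k : ℝ) ≤ M.Lsum ε (α * (-Real.log ε)) ω}).toReal
      ≤ K1 q * ε ^ ((q : ℝ) / 2) := by
  have hk0 : (0 : ℝ) < k := (half_pos (Nat.cast_pos.mpr hq)).trans_le hk
  have hα0 : 0 ≤ α := (div_nonneg (Nat.cast_nonneg q) (by positivity)).trans hα.1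
  have ht : 0 ≤ α * -Real.log ε :=
    mul_nonneg hα0 (neg_nonneg.mpr (Real.log_nonpos hε.1.le hε.2.le))
  have hexp : Real.exp (-(α * -Real.log ε)) ^ k = ε ^ (α * k) := by
    rw [← Real.exp_nat_mul, Real.rpow_def_of_pos hε.1]
    ring_nf
  have hqk : (q : ℝ) / 2 ≤ α * k := by
    have := (div_le_iff₀ (mul_pos two_pos hk0)).mp hα.1
    linarith
  calc (P {ω | (k : ℝ) ≤ M.Lsum ε (α * -Real.log ε) ω}).toReal
      ≤ (q.factorial * ENNReal.ofReal (Real.exp (-(α * -Real.log ε))) ^ k : ENNReal).toReal :=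
        ENNReal.toReal_mono (by finiteness) (M.measure_Lsum_ge_le ht k)
    _ = q.factorial * ε ^ (α * k) := by
        rw [ENNReal.toReal_mul, ENNReal.toReal_pow, ENNReal.toReal_ofReal (Real.exp_pos _).le,
          hexp, ENNReal.toReal_natCast]
    _ ≤ K1 q * ε ^ ((q : ℝ) / 2) := mul_le_mul (factorial_le_K1 hq)
        (Real.rpow_le_rpow_of_exponent_ge hε.1 hε.2.le hqk) (Real.rpow_nonneg hε.1.le _)
        ((Nat.cast_nonneg _).trans (factorial_le_K1 hq))

/-- `P(L_{αT} ≥ k) ≤ K₁(q) ε^{q/2}` for `k ≥ q/2` and `α ∈ [q/(2k), 1]`. -/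
theorem stmt8
    {Ω : Type*} [MeasurableSpace Ω] (P : Measure Ω) [IsProbabilityMeasure P]
    (ν : Measure Sdown) [IsProbabilityMeasure ν]
    (hν1 : ν {s : Sdown | s.1 0 ∈ Set.Ioo 0 1} = 1)
    (hνcons : ν {s : Sdown | (∑' i, s.1 i) = 1} = 1)
    (q : ℕ) (hq : 0 < q)
    (M : FragModel Ω P q ν)
    (π : Measure ℝ) [IsProbabilityMeasure π]
    (hπpos : π (Set.Iic 0) = 0)
    (hπν : ∀ f : ℝ → ℝ, Measurable f → (∃ C : ℝ, ∀ x, |f x| ≤ C) →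
      ∫ s, (∑' i, s.1 i * f (s.1 i)) ∂ν = ∫ x, f (Real.exp (-x)) ∂π)
    (a b : ℝ) (ha : 0 < a) (hab : a < b) (hsupp : msupport π = Set.Icc a b)
    (k : ℕ) (hk : (q : ℝ) / 2 ≤ k)
    (α : ℝ) (hα : α ∈ Set.Icc ((q : ℝ) / (2 * k)) 1)
    (ε : ℝ) (hε : ε ∈ Set.Ioo (0 : ℝ) 1) :
    (P {ω | (k : ℝ) ≤ M.Lsum ε (α * (-Real.log ε)) ω}).toReal
      ≤ K1 q * ε ^ ((q : ℝ) / 2) :=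
  stmt8_general P ν q hq M k hk α hα ε hε
end
end
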